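/- Crossing symmetry of the one-loop box function: for all z ≠ z̄ in (0,1), define Φ(z,z̄) := [ log((1−z)/(1−z̄)) · log(z z̄) + 2·(Li₂(z) − Li₂(z̄)) ] / (z − z̄). Then Φ(1−z, 1−z̄) = Φ(z,z̄); equivalently, in terms of the cross-ratios u = z z̄ and v = (1−z)(1−z̄), the box function satisfies Φ(u,v) = Φ(v,u). -/

import Mathlib

open Real

/-- The dilogarithm `Li₂(x) = ∑_{n≥1} xⁿ/n²`. -/
noncomputable def Li2 (x : ℝ) : ℝ := ∑' n : ℕ, x ^ (n + 1) / ((n : ℝ) + 1) ^ 2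

/-- The one-loop box function
`Φ(z,z̄) = [log((1−z)/(1−z̄))·log(z z̄) + 2(Li₂(z) − Li₂(z̄))]/(z − z̄)`. -/
noncomputable def boxFn (z zb : ℝ) : ℝ :=
  (Real.log ((1 - z) / (1 - zb)) * Real.log (z * zb) + 2 * (Li2 z - Li2 zb)) / (z - zb)

/-! Euler's reflection formula: `Li₂(x) + Li₂(1 - x) + log x · log (1 - x)` is constant on
`(0, 1)`, because `Li₂'(x) = -log (1 - x) / x` makes its derivative vanish. Substituting it for
`Li₂(1 - z)` and `Li₂(1 - z̄)` turns the numerator of `Φ(1 - z, 1 - z̄)` into minus the numerator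
of `Φ(z, z̄)`, while the denominator changes sign as well. -/

theorem hasDerivAt_Li2_tsum {x : ℝ} (hx : |x| < 1) :
    HasDerivAt Li2 (∑' n : ℕ, x ^ n / ((n : ℝ) + 1)) x := by
  obtain ⟨r, hxr, hr1⟩ := exists_between hx
  have hr0 : 0 < r := (abs_nonneg x).trans_lt hxr
  refine hasDerivAt_tsum_of_isPreconnected (u := fun n : ℕ => r ^ n)
    (g := fun (n : ℕ) (y : ℝ) => y ^ (n + 1) / ((n : ℝ) + 1) ^ 2)
    (g' := fun (n : ℕ) (y : ℝ) => y ^ n / ((n : ℝ) + 1))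
    (t := Metric.ball (0 : ℝ) r) (y₀ := 0) (summable_geometric_of_lt_one hr0.le hr1)
    Metric.isOpen_ball (convex_ball 0 r).isPreconnected (fun n y _ => ?_) (fun n y hy => ?_)
    (Metric.mem_ball_self hr0) (by simp) (by simpa using hxr)
  · refine ((hasDerivAt_pow (n + 1) y).div_const (((n : ℝ) + 1) ^ 2)).congr_deriv ?_
    push_cast
    field_simp
  · rw [mem_ball_zero_iff] at hy
    calc ‖y ^ n / ((n : ℝ) + 1)‖ = |y| ^ n / ((n : ℝ) + 1) := by
          rw [norm_div, norm_pow, Real.norm_eq_abs, Real.norm_of_nonneg (by positivity)]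
      _ ≤ |y| ^ n := div_le_self (by positivity) (by simp)
      _ ≤ r ^ n := pow_le_pow_left₀ (abs_nonneg y) hy.le n

theorem hasSum_pow_div_succ {x : ℝ} (hx : |x| < 1) (hx0 : x ≠ 0) :
    HasSum (fun n : ℕ => x ^ n / ((n : ℝ) + 1)) (-log (1 - x) / x) := by
  refine ((hasSum_pow_div_log_of_abs_lt_one hx).div_const x).congr_fun fun n => ?_
  rw [pow_succ, mul_div_right_comm, mul_div_cancel_right₀ _ hx0]

theorem hasDerivAt_Li2 {x : ℝ} (hx : |x| < 1) (hx0 : x ≠ 0) :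
    HasDerivAt Li2 (-log (1 - x) / x) x :=
  (hasSum_pow_div_succ hx hx0).tsum_eq ▸ hasDerivAt_Li2_tsum hx

theorem hasDerivAt_Li2_reflection {t : ℝ} (ht : t ∈ Set.Ioo (0 : ℝ) 1) :
    HasDerivAt (fun s => Li2 s + Li2 (1 - s) + log s * log (1 - s)) 0 t := by
  obtain ⟨ht0, ht1⟩ := ht
  have h1t : 1 - t ≠ 0 := by linarith
  have hLi2 := hasDerivAt_Li2 (abs_lt.2 ⟨by linarith, ht1⟩) ht0.ne'
  have hLi2_one_sub := (hasDerivAt_Li2 (abs_lt.2 ⟨by linarith, by linarith⟩) h1t).comp t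
    ((hasDerivAt_id t).const_sub 1)
  have hlog_one_sub := ((hasDerivAt_id t).const_sub 1).log h1t
  refine ((hLi2.add hLi2_one_sub).add ((hasDerivAt_log ht0.ne').mul hlog_one_sub)).congr_deriv ?_
  simp only [sub_sub_cancel, id]
  field_simp
  ring

theorem Li2_reflection_eq {x y : ℝ} (hx : x ∈ Set.Ioo (0 : ℝ) 1) (hy : y ∈ Set.Ioo (0 : ℝ) 1) :
    Li2 x + Li2 (1 - x) + log x * log (1 - x) = Li2 y + Li2 (1 - y) + log y * log (1 - y) :=
  isOpen_Ioo.is_const_of_deriv_eq_zero isPreconnected_Ioo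
    (fun _ ht => (hasDerivAt_Li2_reflection ht).differentiableAt.differentiableWithinAt)
    (fun _ ht => (hasDerivAt_Li2_reflection ht).deriv) hx hy

theorem boxFn_eq_of_pos {z zb : ℝ} (hz : 0 < z) (hzb : 0 < zb) (hz1 : 0 < 1 - z)
    (hzb1 : 0 < 1 - zb) :
    boxFn z zb
      = ((log (1 - z) - log (1 - zb)) * (log z + log zb) + 2 * (Li2 z - Li2 zb)) / (z - zb) := by
  rw [boxFn, log_div hz1.ne' hzb1.ne', log_mul hz.ne' hzb.ne']

theorem box_crossing_symmetry_general (z zb : ℝ) (hz : z ∈ Set.Ioo (0 : ℝ) 1)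
    (hzb : zb ∈ Set.Ioo (0 : ℝ) 1) :
    boxFn (1 - z) (1 - zb) = boxFn z zb := by
  obtain ⟨hz0, hz1⟩ := hz
  obtain ⟨hzb0, hzb1⟩ := hzb
  have hreflect := Li2_reflection_eq ⟨hz0, hz1⟩ ⟨hzb0, hzb1⟩
  rw [boxFn_eq_of_pos hz0 hzb0 (by linarith) (by linarith),
    boxFn_eq_of_pos (by linarith) (by linarith) (by linarith) (by linarith),
    sub_sub_cancel, sub_sub_cancel, sub_sub_sub_cancel_left, ← neg_sub z zb, div_neg, ← neg_div]
  congr 1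
  linear_combination (-2 : ℝ) * hreflect

/-- crossing symmetry of the one-loop box function.  For
z ≠ z̄ in (0,1), `Φ(1−z, 1−z̄) = Φ(z,z̄)`; in terms of the cross-ratios
u = z z̄ and v = (1−z)(1−z̄), this says `Φ(u,v) = Φ(v,u)`. -/
theorem box_crossing_symmetry (z zb : ℝ) (hz : z ∈ Set.Ioo (0 : ℝ) 1)
    (hzb : zb ∈ Set.Ioo (0 : ℝ) 1) (hne : z ≠ zb) :
    boxFn (1 - z) (1 - zb) = boxFn z zb :=
  box_crossing_symmetry_general z zb hz hzb
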